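/- Let n ≥ 3 and let d be an odd square-free integer. Then the prime ideal of Q(ζ_{2^n}) lying above 2 (which is unique since 2 is totally ramified in Q(ζ_{2^n})/Q) is unramified in Q(ζ_{2^n}, √d). -/

import Mathlib

/-! After multiplying √d by `i = ζ ^ 2 ^ (n - 2)` if `d ≡ 3 mod 4`, we get `t = u √d` with
`t ^ 2 = 1 - 4 m` and `K(t) = L`, so `L = K(θ)` for the algebraic integer `θ = (1 + t) / 2`, a root
of `X ^ 2 - X + m`. A ramified prime `P` divides the different ideal, which contains `f'(θ)` for
every `f ∈ 𝓞 K[X]` vanishing at `θ`; hence `2 θ - 1 ∈ P`, so `(2 θ - 1) ^ 2 = 1 - 4 m ∈ P`, which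
is impossible if also `2 ∈ P`. -/
open NumberField Polynomial IntermediateField

section
variable {A B : Type*} (K : Type*) {L : Type*} [CommRing A] [Field K] [CommRing B] [Field L]
  [Algebra A K] [Algebra B L] [Algebra A B] [Algebra K L] [Algebra A L]
  [IsScalarTower A K L] [IsScalarTower A B L] [IsDomain A] [IsFractionRing A K]
  [IsIntegrallyClosed A] [IsDedekindDomain B] [Module.IsTorsionFree A B]
  [FiniteDimensional K L] [IsIntegralClosure B A L] [Algebra.IsSeparable K L]

theorem aeval_derivative_mem_of_dvd_differentIdeal {P : Ideal B}
    (hP : P ∣ differentIdeal A B) {x : B} (hx : Algebra.adjoin K {algebraMap B L x} = ⊤)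
    {g : A[X]} (hg : aeval x g = 0) : aeval x (derivative g) ∈ P := by
  obtain ⟨c, rfl⟩ := minpoly.isIntegrallyClosed_dvd (IsIntegralClosure.isIntegral A L x) hg
  have hmin : aeval x (derivative (minpoly A x)) ∈ P :=
    Ideal.le_of_dvd hP (aeval_derivative_mem_differentIdeal A K L x hx)
  rw [derivative_mul, map_add, map_mul, map_mul, minpoly.aeval, zero_mul, add_zero]
  exact P.mul_mem_right _ hmin

end

theorem IsPrimitiveRoot.pow_two_pow_sub_two_sq {R : Type*} [CommRing R] [IsDomain R] {ζ : R}
    {n : ℕ} (hζ : IsPrimitiveRoot ζ (2 ^ n)) (hn : 2 ≤ n) : (ζ ^ 2 ^ (n - 2)) ^ 2 = -1 := by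
  rw [← pow_mul, ← pow_succ, show n - 2 + 1 = n - 1 by omega]
  apply IsPrimitiveRoot.eq_neg_one_of_two_right
  have := hζ.pow_of_dvd (p := 2 ^ (n - 1)) (by positivity) (pow_dvd_pow 2 (by omega))
  rwa [Nat.pow_div (by omega) two_pos, show n - (n - 1) = 1 by omega, pow_one] at this

theorem exists_sq_mul_eq_one_sub_four_mul {R : Type*} [CommRing R] [Nontrivial R] {i : R}
    (hi : i ^ 2 = -1) {d : ℤ} (hd : Odd d) : ∃ u : R, u ≠ 0 ∧ ∃ m : ℤ, u ^ 2 * d = 1 - 4 * m := by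
  obtain ⟨k, rfl⟩ := hd
  rcases Int.even_or_odd k with ⟨j, rfl⟩ | ⟨j, rfl⟩
  · exact ⟨1, one_ne_zero, -j, by push_cast; ring⟩
  · refine ⟨i, fun h => by simp [h] at hi, j + 1, ?_⟩
    rw [hi]; push_cast; ring

namespace NumberField.RingOfIntegers

theorem exists_sq_sub_self_add_eq_zero_of_sq_eq {L : Type*} [Field L] [CharZero L] {t : L} {m : ℤ}
    (ht : t ^ 2 = 1 - 4 * m) : ∃ θ : 𝓞 L, (θ : L) = (1 + t) / 2 ∧ θ ^ 2 - θ + (m : 𝓞 L) = 0 := by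
  have hθ : ((1 + t) / 2) ^ 2 - (1 + t) / 2 + m = 0 := by linear_combination ht / 4
  have hint : IsIntegral ℤ ((1 + t) / 2) := ⟨X ^ 2 - X + C m, by monicity!, by
    simpa only [eval₂_add, eval₂_sub, eval₂_pow, eval₂_X, eval₂_C, algebraMap_int_eq,
      Int.coe_castRingHom] using hθ⟩
  refine ⟨⟨_, hint⟩, rfl, RingOfIntegers.ext ?_⟩
  push_cast
  exact hθ

variable {K L : Type*} [Field K] [NumberField K] [Field L] [NumberField L] [Algebra K L]

theorem dvd_differentIdeal_of_map_le_sq {𝔭 : Ideal (𝓞 K)} [𝔭.IsMaximal] (h𝔭 : 𝔭 ≠ ⊥)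
    {P : Ideal (𝓞 L)} (hP : 𝔭.map (algebraMap (𝓞 K) (𝓞 L)) ≤ P ^ 2) :
    P ∣ differentIdeal (𝓞 K) (𝓞 L) := by
  let := FractionRing.liftAlgebra (𝓞 K) (FractionRing (𝓞 L))
  simpa using pow_sub_one_dvd_differentIdeal (𝓞 K) P 2 h𝔭 (Ideal.dvd_iff_le.mpr hP)

theorem map_under_not_le_sq_of_sq_sub_self_add_eq_zero {θ : 𝓞 L} (hθ : K⟮(θ : L)⟯ = ⊤)
    {m : 𝓞 K} (hm : θ ^ 2 - θ + algebraMap (𝓞 K) (𝓞 L) m = 0) (P : Ideal (𝓞 L)) [P.IsPrime]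
    (h2 : (2 : 𝓞 L) ∈ P) : ¬ (P.under (𝓞 K)).map (algebraMap (𝓞 K) (𝓞 L)) ≤ P ^ 2 := by
  intro hle
  have h𝔭 : P.under (𝓞 K) ≠ ⊥ := by
    intro h
    have : (2 : 𝓞 K) ∈ P.under (𝓞 K) := Ideal.mem_comap.mpr (by rwa [map_ofNat])
    simp [h] at this
  have : (P.under (𝓞 K)).IsMaximal := Ideal.IsPrime.isMaximal inferInstance h𝔭
  have hθ' : Algebra.adjoin K {(θ : L)} = ⊤ := by
    rw [← IntermediateField.adjoin_simple_toSubalgebra_of_isAlgebraic (.of_finite K _), hθ,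
      IntermediateField.top_toSubalgebra]
  have hg' : derivative (X ^ 2 - X + C m) = 2 * X - 1 := by
    simp only [derivative_add, derivative_sub, derivative_X_pow, derivative_X, derivative_C]
    norm_num [C_ofNat]
  have hderiv : 2 * θ - 1 ∈ P := by
    have := aeval_derivative_mem_of_dvd_differentIdeal K
      (dvd_differentIdeal_of_map_le_sq h𝔭 hle) hθ' (g := X ^ 2 - X + C m) (by simpa using hm)
    rwa [hg', map_sub, map_mul, aeval_X, map_one, map_ofNat] at this
  have h1 : (1 : 𝓞 L) = (2 * θ - 1) ^ 2 + 2 * (2 * algebraMap (𝓞 K) (𝓞 L) m) := by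
    linear_combination -4 * hm
  exact Ideal.IsPrime.ne_top ‹_› <| (Ideal.eq_top_iff_one P).mpr <| h1 ▸
    P.add_mem (P.pow_mem_of_mem hderiv 2 two_pos) (P.mul_mem_right _ h2)

end NumberField.RingOfIntegers

open NumberField.RingOfIntegers

theorem stmt_5_general (n : ℕ) (hn : 3 ≤ n) (d : ℤ) (hodd : Odd d)
    (K : Type*) [Field K] [NumberField K]
    (ζ : K) (hζ : IsPrimitiveRoot ζ (2 ^ n))
    (L : Type*) [Field L] [NumberField L] [Algebra K L]
    (s : L) (hs : s ^ 2 = (d : L)) (hL : IntermediateField.adjoin K {s} = ⊤)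
    (𝔭 : Ideal (𝓞 K)) (h2 : (2 : 𝓞 K) ∈ 𝔭) :
    ¬ ∃ P : Ideal (𝓞 L), P.IsPrime ∧
        Ideal.comap (RingOfIntegers.mapRingHom (algebraMap K L)) P = 𝔭 ∧
        1 < sSup {n : ℕ | Ideal.map (RingOfIntegers.mapRingHom (algebraMap K L)) 𝔭 ≤ P ^ n} := by
  rintro ⟨P, hP, rfl, hram⟩
  obtain ⟨u, hu, m, hum⟩ :=
    exists_sq_mul_eq_one_sub_four_mul (hζ.pow_two_pow_sub_two_sq (by omega)) hodd
  have hu' : algebraMap K L u ≠ 0 := (_root_.map_ne_zero _).mpr hu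
  have ht : (algebraMap K L u * s) ^ 2 = 1 - 4 * m := by
    have := congrArg (algebraMap K L) hum
    simp only [map_mul, map_sub, map_one, map_ofNat, map_pow, map_intCast] at this
    linear_combination this + algebraMap K L u ^ 2 * hs
  obtain ⟨θ, hθt, hθ⟩ := exists_sq_sub_self_add_eq_zero_of_sq_eq ht
  have hθK : K⟮(θ : L)⟯ = ⊤ := by
    rw [eq_top_iff, ← hL, adjoin_simple_le_iff]
    have hsθ : s = algebraMap K L u⁻¹ * (2 * θ - 1) := by
      rw [hθt, map_inv₀]
      field_simp
      ring
    rw [hsθ]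
    exact mul_mem (IntermediateField.algebraMap_mem _ _)
      (sub_mem (mul_mem (ofNat_mem _ 2) (mem_adjoin_simple_self K _)) (one_mem _))
  exact map_under_not_le_sq_of_sq_sub_self_add_eq_zero hθK (m := m) (by simpa using hθ) P
    (by rwa [Ideal.mem_comap, map_ofNat] at h2) (Ideal.le_pow_of_le_ramificationIdx' hram)

/-- For n ≥ 3 and d an odd square-free integer, any prime ideal of Q(ζ_{2^n})
lying above 2 is unramified in Q(ζ_{2^n}, √d). -/
theorem stmt_5 (n : ℕ) (hn : 3 ≤ n) (d : ℤ) (hodd : Odd d) (hsf : Squarefree d)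
    (K : Type*) [Field K] [NumberField K]
    (ζ : K) (hζ : IsPrimitiveRoot ζ (2 ^ n)) (hK : IntermediateField.adjoin ℚ {ζ} = ⊤)
    (L : Type*) [Field L] [NumberField L] [Algebra K L]
    (s : L) (hs : s ^ 2 = (d : L)) (hL : IntermediateField.adjoin K {s} = ⊤)
    (𝔭 : Ideal (𝓞 K)) (h𝔭 : 𝔭.IsPrime) (h2 : (2 : 𝓞 K) ∈ 𝔭) :
    ¬ ∃ P : Ideal (𝓞 L), P.IsPrime ∧
        Ideal.comap (RingOfIntegers.mapRingHom (algebraMap K L)) P = 𝔭 ∧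
        1 < sSup {n : ℕ | Ideal.map (RingOfIntegers.mapRingHom (algebraMap K L)) 𝔭 ≤ P ^ n} :=
  stmt_5_general n hn d hodd K ζ hζ L s hs hL 𝔭 h2
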